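/- Let G be a weighted undirected graph partitioned into G_1, ..., G_k, and suppose s ∈ G_i is a boundary vertex and t ∈ G_j (i ≠ j) is a non-boundary (inner) vertex. Let b be the last boundary vertex on a shortest path p from s to t. Then b ∈ B_j, the subpath of p from b to t lies entirely in G_j, and d_G(s, t) = d_G(s, b) + d_{G_j}(b, t). -/

import Mathlib

open scoped ENNReal Classical

namespace PSP

/-- A weighted undirected graph: symmetric adjacency and a weight function
with values in `ℝ≥0∞` (so weights are non-negative). -/
structure WGraph (V : Type*) where
  Adj : V → V → Prop
  symm : ∀ {u v}, Adj u v → Adj v u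
  w : V → V → ℝ≥0∞

variable {V : Type*} {ι : Type*}

/-- Sum of `f` over consecutive pairs of a list. -/
noncomputable def pairSum (f : V → V → ℝ≥0∞) : List V → ℝ≥0∞
  | a :: b :: rest => f a b + pairSum f (b :: rest)
  | _ => 0

/-- Weighted length of a walk (given as a list of vertices). -/
noncomputable def wlen (G : WGraph V) (l : List V) : ℝ≥0∞ := pairSum G.w l

/-- `l` is a walk in `G` from `s` to `t`: consecutive vertices are adjacent,
the first vertex is `s` and the last is `t`. -/
def IsWalk (G : WGraph V) (s t : V) (l : List V) : Prop :=
  l.Chain' G.Adj ∧ l.head? = some s ∧ l.getLast? = some t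

/-- Shortest-path distance in `G` (`⊤` if no walk exists). -/
noncomputable def dist (G : WGraph V) (s t : V) : ℝ≥0∞ :=
  sInf {x | ∃ l, IsWalk G s t l ∧ wlen G l = x}

/-- Induced subgraph on a vertex set `S`. -/
def induce (G : WGraph V) (S : Set V) : WGraph V where
  Adj u v := G.Adj u v ∧ u ∈ S ∧ v ∈ S
  symm h := ⟨G.symm h.1, h.2.2, h.2.1⟩
  w := G.w

/-- A partition of the vertex set is given by a function `P : V → ι`
assigning each vertex its partition index. The set of all boundary
vertices: vertices having a neighbor in another partition. -/
def bdry (G : WGraph V) (P : V → ι) : Set V :=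
  {v | ∃ u, G.Adj v u ∧ P u ≠ P v}

/-- Boundary vertices of partition `i`. -/
def bdryIn (G : WGraph V) (P : V → ι) (i : ι) : Set V :=
  {v | P v = i ∧ ∃ u, G.Adj v u ∧ P u ≠ i}

/-- The induced subgraph `G_i` of partition `i`. -/
def partGraph (G : WGraph V) (P : V → ι) (i : ι) : WGraph V :=
  induce G {x | P x = i}

/-- The No-Boundary overlay graph `G̃`: vertices are boundary vertices; for each
partition, each boundary pair gets an edge of weight equal to the *local*
partition distance; inter-partition edges of `G` keep their original weight. -/
noncomputable def overlay (G : WGraph V) (P : V → ι) : WGraph V where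
  Adj u v := (P u = P v ∧ u ∈ bdry G P ∧ v ∈ bdry G P) ∨ (P u ≠ P v ∧ G.Adj u v)
  symm := by
    rintro u v (⟨h1, h2, h3⟩ | ⟨h1, h2⟩)
    · exact Or.inl ⟨h1.symm, h3, h2⟩
    · exact Or.inr ⟨fun h => h1 h.symm, G.symm h2⟩
  w u v := if P u = P v then dist (partGraph G P (P u)) u v else G.w u v

/-- A half-connected boundary vertex: has a non-boundary neighbor in its own partition. -/
def halfC (G : WGraph V) (P : V → ι) (b : V) : Prop :=
  b ∈ bdry G P ∧ ∃ u, G.Adj b u ∧ P u = P b ∧ u ∉ bdry G P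

/-- A full-connected boundary vertex: all in-partition neighbors are boundary vertices. -/
def fullC (G : WGraph V) (P : V → ι) (b : V) : Prop :=
  b ∈ bdry G P ∧ ∀ u, G.Adj b u → P u = P b → u ∈ bdry G P

/-- The pruned overlay graph `G̃'`, with inserted boundary-pair weights `ω`:
edges among half-connected boundary pairs of the same partition (weight `ω`),
all inter-partition edges, and the original in-partition adjacent edges of
full-connected boundary vertices. -/
noncomputable def pruned (G : WGraph V) (P : V → ι) (ω : V → V → ℝ≥0∞) : WGraph V where
  Adj u v :=
    (P u = P v ∧ halfC G P u ∧ halfC G P v) ∨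
    (P u ≠ P v ∧ G.Adj u v) ∨
    (P u = P v ∧ G.Adj u v ∧ u ∈ bdry G P ∧ v ∈ bdry G P ∧ (fullC G P u ∨ fullC G P v))
  symm := by
    rintro u v (⟨h1, h2, h3⟩ | ⟨h1, h2⟩ | ⟨h1, h2, h3, h4, h5⟩)
    · exact Or.inl ⟨h1.symm, h3, h2⟩
    · exact Or.inr (Or.inl ⟨fun h => h1 h.symm, G.symm h2⟩)
    · exact Or.inr (Or.inr ⟨h1.symm, G.symm h2, h4, h3, h5.symm⟩)
  w u v := if P u = P v ∧ halfC G P u ∧ halfC G P v then ω u v else G.w u v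

/-- The augmented partition graph `G'_i`: the induced subgraph `G_i` plus, for each
boundary pair `b₁ b₂ ∈ B_i`, an inserted edge of weight `ω b₁ b₂` (taking the
minimum with an already-existing edge weight). -/
noncomputable def augment (G : WGraph V) (P : V → ι) (i : ι) (ω : V → V → ℝ≥0∞) : WGraph V where
  Adj u v := (G.Adj u v ∧ P u = i ∧ P v = i) ∨ (u ∈ bdryIn G P i ∧ v ∈ bdryIn G P i)
  symm := by
    rintro u v (⟨h1, h2, h3⟩ | ⟨h1, h2⟩)
    · exact Or.inl ⟨G.symm h1, h3, h2⟩
    · exact Or.inr ⟨h2, h1⟩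
  w u v :=
    if u ∈ bdryIn G P i ∧ v ∈ bdryIn G P i then
      (if G.Adj u v ∧ P u = i ∧ P v = i then min (ω u v) (G.w u v) else ω u v)
    else G.w u v

/-- Graph obtained from `G` by adding, for every pair `u v ∈ S`, a shortcut edge
of weight `dist G u v` (taking the minimum with an already-existing edge weight). -/
noncomputable def shortcut (G : WGraph V) (S : Set V) : WGraph V where
  Adj u v := G.Adj u v ∨ (u ∈ S ∧ v ∈ S)
  symm := by
    rintro u v (h | ⟨h1, h2⟩)
    · exact Or.inl (G.symm h)
    · exact Or.inr ⟨h2, h1⟩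
  w u v :=
    if u ∈ S ∧ v ∈ S then
      (if G.Adj u v then min (dist G u v) (G.w u v) else dist G u v)
    else G.w u v

/-- Vertex-splitting construction: each cut vertex `x ∈ X` keeps its neighbors in
group `N x 0`; for `1 ≤ i ≤ l x` a duplicate `(x, i)` is created, connected to the
vertices of `N x i` with the original weights and to `x` by a zero-weight edge. -/
noncomputable def split (G : WGraph V) (X : Set V) (N : V → ℕ → Set V) (l : V → ℕ) :
    WGraph (V ⊕ V × ℕ) where
  Adj a b := match a, b with
    | .inl u, .inl v => G.Adj u v ∧ (u ∈ X → v ∈ N u 0) ∧ (v ∈ X → u ∈ N v 0)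
    | .inl v, .inr (x, i) => x ∈ X ∧ 1 ≤ i ∧ i ≤ l x ∧ ((G.Adj x v ∧ v ∈ N x i) ∨ v = x)
    | .inr (x, i), .inl v => x ∈ X ∧ 1 ≤ i ∧ i ≤ l x ∧ ((G.Adj x v ∧ v ∈ N x i) ∨ v = x)
    | .inr _, .inr _ => False
  symm := by
    rintro (u | ⟨x, i⟩) (v | ⟨y, j⟩) h
    · exact ⟨G.symm h.1, h.2.2, h.2.1⟩
    · exact h
    · exact h
    · exact h.elim
  w a b := match a, b with
    | .inl u, .inl v => G.w u v
    | .inl v, .inr (x, _) => if v = x then 0 else G.w x v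
    | .inr (x, _), .inl v => if v = x then 0 else G.w x v
    | .inr _, .inr _ => 0


/-!
A step of a walk into another part lands on a boundary vertex, so after its last boundary
vertex `b` the walk stays in one part, which must be the part `j` of `t`. Cutting the shortest
walk at `b` bounds `d_G(s,b) + d_{G_j}(b,t)` by its length `d_G(s,t)`; the reverse inequality is
the triangle inequality combined with `d_G ≤ d_{G_j}`.
-/

variable {G : WGraph V} {s b t : V}

theorem pairSum_append_cons (f : V → V → ℝ≥0∞) (l₁ : List V) (b : V) (l₂ : List V) :
    pairSum f (l₁ ++ b :: l₂) = pairSum f (l₁ ++ [b]) + pairSum f (b :: l₂) := by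
  induction l₁ with
  | nil => simp [pairSum]
  | cons a l₁ ih =>
    cases l₁ with
    | nil => simp [pairSum]
    | cons c l₁ =>
      simp only [List.cons_append] at ih ⊢
      rw [pairSum, ih, pairSum, add_assoc]

theorem wlen_append_cons (G : WGraph V) (l₁ : List V) (b : V) (l₂ : List V) :
    wlen G (l₁ ++ b :: l₂) = wlen G (l₁ ++ [b]) + wlen G (b :: l₂) :=
  pairSum_append_cons G.w l₁ b l₂

theorem isWalk_append_cons_iff {l₁ l₂ : List V} :
    IsWalk G s t (l₁ ++ b :: l₂) ↔ IsWalk G s b (l₁ ++ [b]) ∧ IsWalk G b t (b :: l₂) := by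
  simp only [IsWalk, List.head?_append, List.getLast?_append_cons, List.getLast?_singleton,
    List.head?_cons, and_true, true_and]
  constructor
  · rintro ⟨hc, hs, ht⟩
    exact ⟨⟨(List.isChain_split.1 hc).1, hs⟩, (List.isChain_split.1 hc).2, ht⟩
  · rintro ⟨⟨hc₁, hs⟩, hc₂, ht⟩
    exact ⟨List.isChain_split.2 ⟨hc₁, hc₂⟩, hs, ht⟩

theorem IsWalk.exists_eq_cons {l : List V} (h : IsWalk G s t l) : ∃ l₂, l = s :: l₂ := by
  obtain ⟨-, hs, -⟩ := h
  cases l with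
  | nil => simp at hs
  | cons x l₂ => exact ⟨l₂, by simp_all⟩

theorem IsWalk.exists_eq_append_singleton {l : List V} (h : IsWalk G s t l) :
    ∃ l₁, l = l₁ ++ [t] :=
  List.getLast?_eq_some_iff.1 h.2.2

theorem IsWalk.induce {S : Set V} {l : List V} (h : IsWalk G s t l) (hS : ∀ x ∈ l, x ∈ S) :
    IsWalk (induce G S) s t l :=
  ⟨h.1.imp_of_mem_imp fun _ _ hx hy hxy => ⟨hxy, hS _ hx, hS _ hy⟩, h.2⟩

theorem dist_le_wlen {l : List V} (h : IsWalk G s t l) : dist G s t ≤ wlen G l :=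
  sInf_le ⟨l, h, rfl⟩

theorem dist_eq_iInf (G : WGraph V) (s t : V) :
    dist G s t = ⨅ (l) (_ : IsWalk G s t l), wlen G l := by
  refine le_antisymm (le_iInf₂ fun l hl => dist_le_wlen hl) (le_sInf ?_)
  rintro _ ⟨l, hl, rfl⟩
  exact iInf₂_le l hl

theorem dist_triangle (G : WGraph V) (s b t : V) :
    dist G s t ≤ dist G s b + dist G b t := by
  rw [dist_eq_iInf G s b, dist_eq_iInf G b t]
  refine ENNReal.le_iInf₂_add_iInf₂ fun l₁ h₁ l₂ h₂ => ?_
  obtain ⟨l₁, rfl⟩ := h₁.exists_eq_append_singleton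
  obtain ⟨l₂, rfl⟩ := h₂.exists_eq_cons
  rw [← wlen_append_cons]
  exact dist_le_wlen (isWalk_append_cons_iff.2 ⟨h₁, h₂⟩)

theorem dist_le_dist_induce (G : WGraph V) (S : Set V) (u v : V) :
    dist G u v ≤ dist (induce G S) u v :=
  sInf_le_sInf fun _ ⟨l, hl, hlen⟩ => ⟨l, ⟨hl.1.imp fun _ _ h => h.1, hl.2⟩, hlen⟩

theorem part_eq_of_isChain_cons {P : V → ι} {c : V} {m : List V}
    (h : (c :: m).IsChain G.Adj) (hm : ∀ x ∈ m, x ∉ bdry G P) : ∀ x ∈ c :: m, P x = P c := by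
  induction m generalizing c with
  | nil => simp
  | cons d m ih =>
    obtain ⟨hcd, hch⟩ := List.isChain_cons_cons.1 h
    have hdc : P d = P c := by
      by_contra hne
      exact hm d List.mem_cons_self ⟨c, G.symm hcd, Ne.symm hne⟩
    intro x hx
    rcases List.mem_cons.1 hx with rfl | hx
    · rfl
    · rw [ih hch (fun y hy => hm y (List.mem_cons_of_mem d hy)) x hx, hdc]

theorem stmt17_general {V ι : Type*} (G : WGraph V) (P : V → ι) (j : ι)
    (s t : V) (ht : P t = j)
    (l l1 l2 : List V) (b : V)
    (hwalk : IsWalk G s t l) (hsp : wlen G l = dist G s t)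
    (hdec : l = l1 ++ b :: l2) (hb : b ∈ bdry G P)
    (hlast : ∀ x ∈ l2, x ∉ bdry G P) :
    b ∈ bdryIn G P j ∧ (∀ x ∈ b :: l2, P x = j) ∧
    dist G s t = dist G s b + dist (partGraph G P j) b t := by
  subst hdec
  obtain ⟨hsb, hbt⟩ := isWalk_append_cons_iff.1 hwalk
  have hpart : ∀ x ∈ b :: l2, P x = j := by
    have hP := part_eq_of_isChain_cons hbt.1 hlast
    intro x hx
    rw [hP x hx, ← hP t (List.mem_of_getLast? hbt.2.2), ht]
  have hbj : P b = j := hpart b List.mem_cons_self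
  obtain ⟨u, hbu, hu⟩ := hb
  refine ⟨⟨hbj, u, hbu, hbj ▸ hu⟩, hpart, le_antisymm ?_ ?_⟩
  · exact (dist_triangle G s b t).trans (add_le_add_right (dist_le_dist_induce G _ b t) _)
  · calc dist G s b + dist (partGraph G P j) b t
        ≤ wlen G (l1 ++ [b]) + wlen G (b :: l2) :=
          add_le_add (dist_le_wlen hsb) (dist_le_wlen (hbt.induce hpart))
      _ = dist G s t := by rw [← wlen_append_cons, hsp]

/-- cross-partition, boundary source to inner target: the last
boundary vertex `b` of the shortest path belongs to `B_j`, the tail stays in `G_j`,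
and `d_G(s,t) = d_G(s,b) + d_{G_j}(b,t)`. -/
theorem stmt17 {V ι : Type*} (G : WGraph V) (P : V → ι) (i j : ι) (hij : i ≠ j)
    (s t : V) (hs : s ∈ bdryIn G P i) (ht : P t = j) (htb : t ∉ bdry G P)
    (l l1 l2 : List V) (b : V)
    (hwalk : IsWalk G s t l) (hsp : wlen G l = dist G s t)
    (hdec : l = l1 ++ b :: l2) (hb : b ∈ bdry G P)
    (hlast : ∀ x ∈ l2, x ∉ bdry G P) :
    b ∈ bdryIn G P j ∧ (∀ x ∈ b :: l2, P x = j) ∧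
    dist G s t = dist G s b + dist (partGraph G P j) b t :=
  stmt17_general G P j s t ht l l1 l2 b hwalk hsp hdec hb hlast

end PSP
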